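/- arXiv:1912.07895 — 4 statements merged into one kernel-verified Lean document; each statement's English description precedes it below -/
import Mathlib

section
/- In an SINR graph with interference-cancellation factor γ > 0 and SINR threshold τ > 0, every vertex has degree strictly less than 1 + 1/(τγ). Explicitly: let {(x_i, p_i)} be a countable collection of points in ℝ^d with positive powers p_i, let ℓ : [0,∞) → [0,∞), N₀ ≥ 0, and connect x_i and x_j (i ≠ j) by an edge iff p_i ℓ(|x_i − x_j|) > τ(N₀ + γ Σ_{k ≠ i,j} p_k ℓ(|x_k − x_j|)) and the symmetric condition holds. Then for each j, the number of indices i ≠ j connected to x_j by an edge is strictly less than 1 + 1/(τγ), i.e. at most ⌈1/(τγ)⌉. -/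
open scoped ENNReal

/-- In an SINR graph with interference-cancellation factor `γ > 0` and SINR
threshold `τ > 0`, every vertex has degree strictly less than `1 + 1/(τγ)`; in particular the
neighborhood of any vertex is finite with at most `⌊1/(τγ)⌋ + 1` elements. -/
theorem sinr_degree_bound {d : ℕ} {ι : Type*} [Countable ι]
    (x : ι → EuclideanSpace ℝ (Fin d)) (p : ι → ℝ) (ℓ : ℝ → ℝ)
    (N₀ τ γ : ℝ) (hp : ∀ i, 0 < p i) (hℓ : ∀ r, 0 ≤ ℓ r)
    (hN₀ : 0 ≤ N₀) (hτ : 0 < τ) (hγ : 0 < γ)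
    (hsum : ∀ j, Summable fun k => p k * ℓ (dist (x k) (x j)))
    (edge : ι → ι → Prop)
    (hedge : ∀ i j, edge i j ↔ i ≠ j ∧
      p i * ℓ (dist (x i) (x j)) >
        τ * (N₀ + γ * ∑' k : {k : ι // k ≠ i ∧ k ≠ j}, p k.1 * ℓ (dist (x k.1) (x j))) ∧
      p j * ℓ (dist (x i) (x j)) >
        τ * (N₀ + γ * ∑' k : {k : ι // k ≠ i ∧ k ≠ j}, p k.1 * ℓ (dist (x k.1) (x i)))) :
    ∀ j : ι, {i | edge i j}.Finite ∧
      (∀ s : Finset ι, (∀ i ∈ s, edge i j) → (s.card : ℝ) < 1 + 1 / (τ * γ)) ∧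
      {i | edge i j}.ncard ≤ Nat.floor (1 / (τ * γ)) + 1 := by
  intro j
  classical
  set c := τ * γ with hcdef
  have hc0 : 0 < c := mul_pos hτ hγ
  set f : ι → ℝ := fun k => p k * ℓ (dist (x k) (x j)) with hfdef
  have hf0 : ∀ k, 0 ≤ f k := fun k => mul_nonneg (hp k).le (hℓ _)
  have hS : Summable f := hsum j
  set T := ∑' k, f k with hTdef
  have key : ∀ s : Finset ι, (∀ i ∈ s, edge i j) → (s.card : ℝ) < 1 + 1 / c := by
    intro s hs
    rcases s.eq_empty_or_nonempty with rfl | hne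
    · simp only [Finset.card_empty, Nat.cast_zero]
      have : 0 < 1 / c := by positivity
      linarith
    have hnej : ∀ i ∈ s, i ≠ j := fun i hi => ((hedge i j).1 (hs i hi)).1
    have hIi : ∀ i, i ≠ j → (∑' k : {k : ι // k ≠ i ∧ k ≠ j}, f k.1) = T - f i - f j := by
      intro i hij
      have hset : {k : ι | k ≠ i ∧ k ≠ j} = (↑({i, j} : Finset ι) : Set ι)ᶜ := by
        ext k; simp [not_or]
      have h1 : (∑' k : {k : ι // k ≠ i ∧ k ≠ j}, f k.1)
          = ∑' k : ((↑({i, j} : Finset ι) : Set ι)ᶜ : Set ι), f k := by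
        exact tsum_congr_set_coe f hset
      have h2 := Summable.sum_add_tsum_compl (s := ({i, j} : Finset ι)) hS
      have h3 : ∑ k ∈ ({i, j} : Finset ι), f k = f i + f j := by
        rw [Finset.sum_insert (by simpa using hij), Finset.sum_singleton]
      rw [h1]
      rw [h3] at h2
      linarith
    -- for each neighbor i : c * (T - f j) < (1 + c) * f i and also useful bounds
    have hfi : ∀ i ∈ s, 0 < f i ∧ c * (T - f j) < (1 + c) * f i := by
      intro i hi
      obtain ⟨hij, h1, -⟩ := (hedge i j).1 (hs i hi)
      have h1' : τ * (N₀ + γ * (T - f i - f j)) < f i := by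
        rw [hIi i hij] at h1; exact h1
      have hI0 : 0 ≤ T - f i - f j := by
        have := tsum_nonneg (L := SummationFilter.unconditional _) (fun k : {k : ι // k ≠ i ∧ k ≠ j} => hf0 k.1)
        rwa [hIi i hij] at this
      constructor
      · nlinarith
      · nlinarith
    obtain ⟨i₀, hi₀⟩ := hne
    -- sum of f over s is at most T - f j
    have hj : j ∉ s := fun h => (hnej j h) rfl
    have hsum_le : ∑ i ∈ s, f i ≤ T - f j := by
      have h := Summable.sum_le_tsum (insert j s) (fun k _ => hf0 k) hS
      rw [Finset.sum_insert hj] at h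
      linarith
    have hM : 0 < T - f j := by
      have h1 : f i₀ ≤ ∑ i ∈ s, f i :=
        Finset.single_le_sum (fun k _ => hf0 k) hi₀
      have := (hfi i₀ hi₀).1
      linarith
    have hlow : (s.card : ℝ) * (c * (T - f j)) < (1 + c) * ∑ i ∈ s, f i := by
      have h := Finset.sum_lt_sum_of_nonempty ⟨i₀, hi₀⟩
        (f := fun _ => c * (T - f j)) (g := fun i => (1 + c) * f i)
        (fun i hi => (hfi i hi).2)
      rw [Finset.sum_const, nsmul_eq_mul] at h
      rw [Finset.mul_sum]
      simpa using h
    have hcard : (s.card : ℝ) * c < 1 + c := by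
      have h2 : (1 + c) * ∑ i ∈ s, f i ≤ (1 + c) * (T - f j) := by
        apply mul_le_mul_of_nonneg_left hsum_le (by linarith)
      have h3 : (s.card : ℝ) * (c * (T - f j)) < (1 + c) * (T - f j) := lt_of_lt_of_le hlow h2
      nlinarith
    have hrw : (1 : ℝ) + 1 / c = (1 + c) / c := by field_simp; ring
    rw [hrw, lt_div_iff₀ hc0]
    nlinarith
  have hfloor : (1 : ℝ) / c < (Nat.floor (1 / c) : ℝ) + 1 := Nat.lt_floor_add_one _
  have hfin : {i | edge i j}.Finite := by
    rw [← Set.not_infinite]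
    intro h
    obtain ⟨t, hts, htc⟩ := h.exists_subset_card_eq (Nat.floor (1 / c) + 2)
    have h1 := key t (fun i hi => hts hi)
    rw [htc] at h1
    push_cast at h1
    linarith
  refine ⟨hfin, key, ?_⟩
  have h := key hfin.toFinset (fun i hi => hfin.mem_toFinset.1 hi)
  rw [Set.ncard_eq_toFinset_card _ hfin]
  have h2 : (hfin.toFinset.card : ℝ) < (Nat.floor (1 / c) : ℝ) + 2 := by linarith
  exact_mod_cast Nat.lt_succ_iff.mp (by exact_mod_cast h2)
end

section
/- If γ ≥ 1/(2τ) in an SINR graph, then every vertex has degree at most 2. Precisely, under the SINR edge rule with parameters τ > 0, γ ≥ 1/(2τ), N₀ ≥ 0, no vertex x_j can be connected by edges to three distinct other vertices. -/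
open scoped ENNReal

/-- If `γ ≥ 1/(2τ)` in an SINR graph, then every vertex has degree at most 2:
no vertex can be connected by edges to three distinct other vertices. -/
theorem sinr_degree_le_two {d : ℕ} {ι : Type*} [Countable ι]
    (x : ι → EuclideanSpace ℝ (Fin d)) (p : ι → ℝ) (ℓ : ℝ → ℝ)
    (N₀ τ γ : ℝ) (hp : ∀ i, 0 < p i) (hℓ : ∀ r, 0 ≤ ℓ r)
    (hN₀ : 0 ≤ N₀) (hτ : 0 < τ) (hγ : γ ≥ 1 / (2 * τ))
    (hsum : ∀ j, Summable fun k => p k * ℓ (dist (x k) (x j)))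
    (edge : ι → ι → Prop)
    (hedge : ∀ i j, edge i j ↔ i ≠ j ∧
      p i * ℓ (dist (x i) (x j)) >
        τ * (N₀ + γ * ∑' k : {k : ι // k ≠ i ∧ k ≠ j}, p k.1 * ℓ (dist (x k.1) (x j))) ∧
      p j * ℓ (dist (x i) (x j)) >
        τ * (N₀ + γ * ∑' k : {k : ι // k ≠ i ∧ k ≠ j}, p k.1 * ℓ (dist (x k.1) (x i)))) :
    ∀ j i₁ i₂ i₃ : ι, i₁ ≠ i₂ → i₁ ≠ i₃ → i₂ ≠ i₃ →
      edge i₁ j → edge i₂ j → edge i₃ j → False := by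
  intro j i₁ i₂ i₃ h12 h13 h23 e1 e2 e3
  have hj1 : i₁ ≠ j := ((hedge i₁ j).mp e1).1
  have hj2 : i₂ ≠ j := ((hedge i₂ j).mp e2).1
  have hj3 : i₃ ≠ j := ((hedge i₃ j).mp e3).1
  have hfnn : ∀ k, 0 ≤ p k * ℓ (dist (x k) (x j)) :=
    fun k => mul_nonneg (hp k).le (hℓ _)
  have hγτ : 1 / 2 ≤ τ * γ := by
    rw [ge_iff_le, div_le_iff₀ (by positivity)] at hγ
    nlinarith
  have key : ∀ a b c : ι, b ≠ a → c ≠ a → b ≠ j → c ≠ j → b ≠ c → edge a j →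
      p b * ℓ (dist (x b) (x j)) + p c * ℓ (dist (x c) (x j)) <
        2 * (p a * ℓ (dist (x a) (x j))) := by
    intro a b c hba hca hbj hcj hbc ea
    classical
    obtain ⟨-, h, -⟩ := (hedge a j).mp ea
    set S := ∑' k : {k : ι // k ≠ a ∧ k ≠ j}, p k.1 * ℓ (dist (x k.1) (x j)) with hS
    have hsub : Summable fun k : {k : ι // k ≠ a ∧ k ≠ j} =>
        p k.1 * ℓ (dist (x k.1) (x j)) := (hsum j).subtype _
    have hne : (⟨b, ⟨hba, hbj⟩⟩ : {k : ι // k ≠ a ∧ k ≠ j}) ≠ ⟨c, ⟨hca, hcj⟩⟩ := by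
      simp [hbc]
    have hle : p b * ℓ (dist (x b) (x j)) + p c * ℓ (dist (x c) (x j)) ≤ S := by
      have h1 := Summable.sum_le_tsum
        ({⟨b, ⟨hba, hbj⟩⟩, ⟨c, ⟨hca, hcj⟩⟩} : Finset {k : ι // k ≠ a ∧ k ≠ j})
        (fun i _ => hfnn i.1) hsub
      rwa [Finset.sum_pair hne] at h1
    have hSnn : 0 ≤ S := tsum_nonneg fun k => hfnn k.1
    nlinarith [h]
  have k1 := key i₁ i₂ i₃ h12.symm h13.symm hj2 hj3 h23 e1
  have k2 := key i₂ i₁ i₃ h12 h23.symm hj1 hj3 h13 e2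
  have k3 := key i₃ i₁ i₂ h13 h23 hj1 hj2 h12 e3
  linarith
end

section
/- Interference bound yields Gilbert subgraph: fix r with d₀ < r < r_B = ℓ^{−1}(τN₀/p), constant powers p, and set γ' = (N₀/(pM))(ℓ(r)/ℓ(r_B) − 1) > 0. If X_i, X_j are points of the configuration with |X_i − X_j| < r and the interference at both X_i and X_j is at most pM, i.e. Σ_{k∉{i,j}} p ℓ(|X_k − X_j|) ≤ pM and Σ_{k∉{i,j}} p ℓ(|X_k − X_i|) ≤ pM, then for every 0 ≤ γ < γ', the SINR edge condition between X_i and X_j holds. -/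
/-- Interference bound yields Gilbert subgraph: for `d₀ < r < r_B` and
`γ' = (N₀/(pM))(ℓ(r)/ℓ(r_B) − 1)`, if two points are within distance `r` and the interference
at both is at most `pM`, then for every `0 ≤ γ < γ'` the SINR edge condition holds. -/
theorem interference_bound_gives_sinr_edge {d : ℕ} {ι : Type*} [Countable ι]
    (x : ι → EuclideanSpace ℝ (Fin d)) (ℓ : ℝ → ℝ)
    (τ N₀ p M d₀ r rB : ℝ)
    (hτ : 0 < τ) (hN₀ : 0 < N₀) (hp : 0 < p) (hM : 0 < M)
    (hanti : AntitoneOn ℓ (Set.Ici 0))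
    (hd₀ : 0 ≤ d₀) (hr : d₀ < r) (hrrB : r < rB)
    (hℓrB : ℓ rB = τ * N₀ / p) (hlt : ℓ rB < ℓ r)
    (i j : ι) (hij : i ≠ j) (hdist : dist (x i) (x j) < r)
    (hIj : (∑' k : {k : ι // k ≠ i ∧ k ≠ j}, p * ℓ (dist (x k.1) (x j))) ≤ p * M)
    (hIi : (∑' k : {k : ι // k ≠ i ∧ k ≠ j}, p * ℓ (dist (x k.1) (x i))) ≤ p * M) :
    ∀ γ : ℝ, 0 ≤ γ → γ < N₀ / (p * M) * (ℓ r / ℓ rB - 1) →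
      p * ℓ (dist (x i) (x j)) >
          τ * (N₀ + γ * ∑' k : {k : ι // k ≠ i ∧ k ≠ j}, p * ℓ (dist (x k.1) (x j))) ∧
        p * ℓ (dist (x i) (x j)) >
          τ * (N₀ + γ * ∑' k : {k : ι // k ≠ i ∧ k ≠ j}, p * ℓ (dist (x k.1) (x i))) := by
  intro γ hγ0 hγ
  have hrB0 : ℓ rB = τ * N₀ / p := hℓrB
  have hℓr : ℓ r ≤ ℓ (dist (x i) (x j)) :=
    hanti (Set.mem_Ici.2 dist_nonneg) (Set.mem_Ici.2 (le_trans dist_nonneg hdist.le))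
      hdist.le
  have hrBpos : 0 < ℓ rB := by rw [hℓrB]; positivity
  have key : ∀ I : ℝ, I ≤ p * M → τ * (N₀ + γ * I) < p * ℓ (dist (x i) (x j)) := by
    intro I hI
    have h1 : τ * (N₀ + γ * I) ≤ τ * (N₀ + γ * (p * M)) := by
      have := mul_le_mul_of_nonneg_left hI hγ0
      nlinarith
    have h2 : τ * (N₀ + γ * (p * M)) < p * ℓ r := by
      have hγ' : γ * (p * M) < N₀ * (ℓ r / ℓ rB - 1) := by
        have := mul_lt_mul_of_pos_right hγ (by positivity : (0:ℝ) < p * M)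
        calc γ * (p * M) < N₀ / (p * M) * (ℓ r / ℓ rB - 1) * (p * M) := this
          _ = N₀ * (ℓ r / ℓ rB - 1) := by field_simp
      have hdiv : ℓ r / ℓ rB = p * ℓ r / (τ * N₀) := by
        rw [hℓrB]; field_simp
      rw [hdiv] at hγ'
      have hτN : 0 < τ * N₀ := by positivity
      have : N₀ * (p * ℓ r / (τ * N₀) - 1) = p * ℓ r / τ - N₀ := by
        field_simp
      rw [this] at hγ'
      have h3 := mul_lt_mul_of_pos_left hγ' hτ
      have h4 : τ * (p * ℓ r / τ - N₀) = p * ℓ r - τ * N₀ := by field_simp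
      rw [h4] at h3
      nlinarith
    have h5 : p * ℓ r ≤ p * ℓ (dist (x i) (x j)) := by nlinarith
    linarith
  exact ⟨key _ hIj, key _ hIi⟩
end

section
/- Degree-2 vertex connects to its two signal-weighted nearest neighbors: let ω be a marked configuration such that for a fixed point x₀ ∈ ω the signal-weighted order at x₀ is a strict total order, and suppose the SINR graph has maximum degree ≤ 2. If x₀ has degree exactly 2, then its two neighbors in the SINR graph are exactly V₁(x₀) and V₂(x₀), the first and second nearest neighbors of x₀ in signal-weighted order, i.e. the two points maximizing received power p ℓ(|x − x₀|) at x₀ (with distance tiebreaking). -/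
/-!
Write `S k` for the power received at `x₀` from `k`. A neighbour `u` of `x₀` satisfies
`S u > τ (N₀ + γ (R - S u))`, where `R` is the total power received at `x₀` from the other
points; the left side grows and the right side shrinks with `S u`, so any point stronger than a
neighbour satisfies the same inequality. If the neighbours were not `V₁, V₂`, one of these would
be a third point stronger than a neighbour. Summing the inequality over three distinct points
with total power `σ ≤ R` gives `σ > τγ (3R - σ) ≥ 2τγ σ ≥ σ`, a contradiction since `2τγ ≥ 1`.
-/

theorem tsum_subtype_ne_and_ne {α ι : Type*} [AddCommGroup α] [UniformSpace α]
    [IsUniformAddGroup α] [CompleteSpace α] [T2Space α] {f : ι → α} (hf : Summable f)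
    {u j : ι} (huj : u ≠ j) :
    ∑' k : {k : ι // k ≠ u ∧ k ≠ j}, f k = ∑' k, f k - f u - f j := by
  classical
  have hcompl := hf.sum_add_tsum_subtype_compl {u, j}
  have hreindex : ∑' k : {k // k ∉ ({u, j} : Finset ι)}, f k
      = ∑' k : {k : ι // k ≠ u ∧ k ≠ j}, f k :=
    (Equiv.subtypeEquivRight (p := fun k => k ∉ ({u, j} : Finset ι))
      (q := fun k => k ≠ u ∧ k ≠ j) fun k => by simp).tsum_eq (f ∘ Subtype.val)
  rw [Finset.sum_pair huj, hreindex] at hcompl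
  rw [← hcompl]
  abel

theorem exists_rel_of_ne_top_two {ι : Type*} {r : ι → ι → Prop} {j v₁ v₂ a b : ι}
    (hv₁ : v₁ ≠ j) (hv₂ : v₂ ≠ j) (hv₁₂ : v₁ ≠ v₂)
    (hv₁max : ∀ k, k ≠ j → k ≠ v₁ → r v₁ k) (hv₂max : ∀ k, k ≠ j → k ≠ v₁ → k ≠ v₂ → r v₂ k)
    (ha : a ≠ j) (hb : b ≠ j) (hab : a ≠ b) (hne : ¬((a = v₁ ∧ b = v₂) ∨ (a = v₂ ∧ b = v₁))) :
    ∃ v, v ≠ a ∧ v ≠ b ∧ v ≠ j ∧ (r v a ∨ r v b) := by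
  push Not at hne
  obtain ⟨hne₁, hne₂⟩ := hne
  by_cases ha₁ : a = v₁
  · subst ha₁
    exact ⟨v₂, hv₁₂.symm, (hne₁ rfl).symm, hv₂, .inr (hv₂max b hb hab.symm (hne₁ rfl))⟩
  by_cases ha₂ : a = v₂
  · subst ha₂
    exact ⟨v₁, hv₁₂, (hne₂ rfl).symm, hv₁, .inr (hv₁max b hb (hne₂ rfl))⟩
  by_cases hb₁ : b = v₁
  · subst hb₁
    exact ⟨v₂, Ne.symm ha₂, hv₁₂.symm, hv₂, .inl (hv₂max a ha hab ha₂)⟩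
  exact ⟨v₁, Ne.symm ha₁, Ne.symm hb₁, hv₁, .inl (hv₁max a ha ha₁)⟩

section SINR

variable {ι : Type*} {S : ι → ℝ} {τ N₀ γ : ℝ} {u v j : ι}

/-- `S k` is the power received at `j` from `k`; the sum is the interference at `j`. -/
def SINRCondition (S : ι → ℝ) (τ N₀ γ : ℝ) (u j : ι) : Prop :=
  τ * (N₀ + γ * ∑' k : {k : ι // k ≠ u ∧ k ≠ j}, S k) < S u

theorem sinrCondition_iff (hS : Summable S) (huj : u ≠ j) :
    SINRCondition S τ N₀ γ u j ↔ τ * (N₀ + γ * (∑' k, S k - S u - S j)) < S u := by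
  rw [SINRCondition, tsum_subtype_ne_and_ne hS huj]

theorem SINRCondition.of_le (hS : Summable S) (hτγ : 0 ≤ τ * γ) (hu : SINRCondition S τ N₀ γ u j)
    (huj : u ≠ j) (hvj : v ≠ j) (huv : S u ≤ S v) : SINRCondition S τ N₀ γ v j := by
  rw [sinrCondition_iff hS huj] at hu
  rw [sinrCondition_iff hS hvj]
  nlinarith [mul_le_mul_of_nonneg_left huv hτγ]

theorem not_sinrCondition_of_three {a b c : ι} (hS₀ : ∀ k, 0 ≤ S k) (hS : Summable S)
    (hτ : 0 ≤ τ) (hN₀ : 0 ≤ N₀) (hτγ : 1 ≤ 2 * (τ * γ))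
    (hab : a ≠ b) (hac : a ≠ c) (hbc : b ≠ c) (haj : a ≠ j) (hbj : b ≠ j) (hcj : c ≠ j)
    (ha : SINRCondition S τ N₀ γ a j) (hb : SINRCondition S τ N₀ γ b j)
    (hc : SINRCondition S τ N₀ γ c j) : False := by
  classical
  rw [sinrCondition_iff hS haj] at ha
  rw [sinrCondition_iff hS hbj] at hb
  rw [sinrCondition_iff hS hcj] at hc
  have htotal : S a + S b + S c + S j ≤ ∑' k, S k := by
    have h := hS.sum_le_tsum {a, b, c, j} (fun k _ => hS₀ k)
    rwa [Finset.sum_insert (by simp [hab, hac, haj]), Finset.sum_insert (by simp [hbc, hbj]),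
      Finset.sum_pair hcj, ← add_assoc, ← add_assoc] at h
  set σ := S a + S b + S c
  set R := ∑' k, S k - S j
  have hσ : 0 ≤ σ := add_nonneg (add_nonneg (hS₀ a) (hS₀ b)) (hS₀ c)
  have hinterference : 2 * (τ * γ) * σ ≤ τ * γ * (3 * R - σ) := by
    nlinarith [mul_le_mul_of_nonneg_left (show σ ≤ R by linarith) (by linarith : 0 ≤ τ * γ)]
  nlinarith [mul_le_mul_of_nonneg_right hτγ hσ, mul_nonneg hτ hN₀]

end SINR

theorem degree_two_vertex_connects_to_signal_nearest_neighbors_general {d : ℕ} {ι : Type*}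
    (x : ι → EuclideanSpace ℝ (Fin d)) (p : ι → ℝ) (ℓ : ℝ → ℝ)
    (N₀ τ γ : ℝ) (hp : ∀ i, 0 ≤ p i) (hℓ : ∀ r, 0 ≤ ℓ r)
    (hN₀ : 0 ≤ N₀) (hτ : 0 < τ) (hγ : γ ≥ 1 / (2 * τ))
    (hsum : ∀ j, Summable fun k => p k * ℓ (dist (x k) (x j)))
    (edge : ι → ι → Prop)
    (hedge : ∀ i j, edge i j ↔ i ≠ j ∧
      p i * ℓ (dist (x i) (x j)) >
        τ * (N₀ + γ * ∑' k : {k : ι // k ≠ i ∧ k ≠ j}, p k.1 * ℓ (dist (x k.1) (x j))) ∧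
      p j * ℓ (dist (x i) (x j)) >
        τ * (N₀ + γ * ∑' k : {k : ι // k ≠ i ∧ k ≠ j}, p k.1 * ℓ (dist (x k.1) (x i))))
    (j₀ : ι)
    (stronger : ι → ι → Prop)
    (hstronger : ∀ a b, stronger a b ↔
      (p a * ℓ (dist (x a) (x j₀)) > p b * ℓ (dist (x b) (x j₀)) ∨
        (p a * ℓ (dist (x a) (x j₀)) = p b * ℓ (dist (x b) (x j₀)) ∧
          dist (x a) (x j₀) < dist (x b) (x j₀))))
    (v1 v2 : ι) (hv1 : v1 ≠ j₀) (hv2 : v2 ≠ j₀) (hv12 : v1 ≠ v2)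
    (hv1max : ∀ k, k ≠ j₀ → k ≠ v1 → stronger v1 k)
    (hv2max : ∀ k, k ≠ j₀ → k ≠ v1 → k ≠ v2 → stronger v2 k)
    (a b : ι) (hab : a ≠ b) (hea : edge a j₀) (heb : edge b j₀) :
    (a = v1 ∧ b = v2) ∨ (a = v2 ∧ b = v1) := by
  set S := fun k => p k * ℓ (dist (x k) (x j₀))
  have hS₀ : ∀ k, 0 ≤ S k := fun k => mul_nonneg (hp k) (hℓ _)
  have hτγ : 1 ≤ 2 * (τ * γ) := by
    rw [ge_iff_le, div_le_iff₀ (by positivity)] at hγ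
    linarith
  have hsinr : ∀ k, edge k j₀ → k ≠ j₀ ∧ SINRCondition S τ N₀ γ k j₀ :=
    fun k hk => ⟨((hedge k j₀).1 hk).1, ((hedge k j₀).1 hk).2.1⟩
  have hweaker : ∀ v c, stronger v c → S c ≤ S v := fun v c h => by
    rcases (hstronger v c).1 h with h | h
    exacts [h.le, h.1.ge]
  have hstrong_sinr : ∀ v c, v ≠ j₀ → edge c j₀ → stronger v c → SINRCondition S τ N₀ γ v j₀ :=
    fun v c hv hc h => (hsinr c hc).2.of_le (hsum j₀) (by linarith) (hsinr c hc).1 hv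
      (hweaker v c h)
  by_contra hne
  obtain ⟨v, hva, hvb, hvj, hv⟩ := exists_rel_of_ne_top_two hv1 hv2 hv12 hv1max hv2max
    (hsinr a hea).1 (hsinr b heb).1 hab hne
  have hv_sinr : SINRCondition S τ N₀ γ v j₀ := by
    rcases hv with h | h
    exacts [hstrong_sinr v a hvj hea h, hstrong_sinr v b hvj heb h]
  exact not_sinrCondition_of_three hS₀ (hsum j₀) hτ.le hN₀ hτγ hab hva.symm hvb.symm
    (hsinr a hea).1 (hsinr b heb).1 hvj (hsinr a hea).2 (hsinr b heb).2 hv_sinr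

/-- A degree-2 vertex of an SINR graph (with `γ ≥ 1/(2τ)`, so that degrees are
bounded by 2) is connected exactly to its first and second nearest neighbors in the
signal-weighted order at that vertex. -/
theorem degree_two_vertex_connects_to_signal_nearest_neighbors {d : ℕ} {ι : Type*} [Countable ι]
    (x : ι → EuclideanSpace ℝ (Fin d)) (p : ι → ℝ) (ℓ : ℝ → ℝ)
    (N₀ τ γ : ℝ) (hp : ∀ i, 0 ≤ p i) (hℓ : ∀ r, 0 ≤ ℓ r)
    (hN₀ : 0 ≤ N₀) (hτ : 0 < τ) (hγ : γ ≥ 1 / (2 * τ))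
    (hsum : ∀ j, Summable fun k => p k * ℓ (dist (x k) (x j)))
    (edge : ι → ι → Prop)
    (hedge : ∀ i j, edge i j ↔ i ≠ j ∧
      p i * ℓ (dist (x i) (x j)) >
        τ * (N₀ + γ * ∑' k : {k : ι // k ≠ i ∧ k ≠ j}, p k.1 * ℓ (dist (x k.1) (x j))) ∧
      p j * ℓ (dist (x i) (x j)) >
        τ * (N₀ + γ * ∑' k : {k : ι // k ≠ i ∧ k ≠ j}, p k.1 * ℓ (dist (x k.1) (x i))))
    (j₀ : ι)
    (stronger : ι → ι → Prop)
    (hstronger : ∀ a b, stronger a b ↔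
      (p a * ℓ (dist (x a) (x j₀)) > p b * ℓ (dist (x b) (x j₀)) ∨
        (p a * ℓ (dist (x a) (x j₀)) = p b * ℓ (dist (x b) (x j₀)) ∧
          dist (x a) (x j₀) < dist (x b) (x j₀))))
    (v1 v2 : ι) (hv1 : v1 ≠ j₀) (hv2 : v2 ≠ j₀) (hv12 : v1 ≠ v2)
    (hv1max : ∀ k, k ≠ j₀ → k ≠ v1 → stronger v1 k)
    (hv2max : ∀ k, k ≠ j₀ → k ≠ v1 → k ≠ v2 → stronger v2 k)
    (a b : ι) (hab : a ≠ b) (hea : edge a j₀) (heb : edge b j₀)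
    (honly : ∀ k, edge k j₀ → k = a ∨ k = b) :
    (a = v1 ∧ b = v2) ∨ (a = v2 ∧ b = v1) :=
  degree_two_vertex_connects_to_signal_nearest_neighbors_general x p ℓ N₀ τ γ hp hℓ hN₀ hτ hγ hsum
    edge hedge j₀ stronger hstronger v1 v2 hv1 hv2 hv12 hv1max hv2max a b hab hea heb
end
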